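/- In the free group F_5 with free generators e_1, …, e_5: if x ∈ Subgroup.closure {e_1,e_2,e_3} and y ∈ Subgroup.closure {e_1,e_2, e_3·⁅e_4,e_5⁆} are conjugate in F_5 (IsConj x y), then there exists z ∈ Subgroup.closure {e_1,e_2} with x conjugate to z in F_5 (IsConj x z). -/

import Mathlib

/-!
Write `σ` for the endomorphism `e₃ ↦ e₃⁅e₄,e₅⁆` fixing the other generators, so that
`y = σ a` with `a ∈ ⟨e₁,e₂,e₃⟩`. Replacing `a` by a cyclically reduced conjugate `v`, `x` is
conjugate to `σ v`. Substituting the reduced word `e₃e₄e₅e₄⁻¹e₅⁻¹` for each `e₃` in `v` creates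
no cancellation, even cyclically, so `σ v` is cyclically reduced. The letters of a cyclically
reduced word survive in every conjugate: conjugating by one letter either causes no cancellation
or rotates the word. Since `x` has no letter `e₄`, `v` has no letter `e₃`; then `σ v = v`.
-/

open scoped commutatorElement

namespace FreeGroup

variable {α β : Type*} {L L₁ L₂ T : List (α × Bool)}

theorem rel_iff_ne_inv {a b : α × Bool} : (a.1 = b.1 → a.2 = b.2) ↔ b ≠ (a.1, !a.2) := by
  obtain ⟨a₁, a₂⟩ := a
  obtain ⟨b₁, b₂⟩ := b
  cases a₂ <;> cases b₂ <;> simp [eq_comm]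

theorem inv_mk_singleton (a : α × Bool) : (mk [a])⁻¹ = mk [(a.1, !a.2)] := by
  simp [inv_mk, invRev]

theorem IsReduced.invRev (h : IsReduced L) : IsReduced (invRev L) := by
  classical
  rw [isReduced_iff_reduce_eq, reduce_invRev, h.reduce_eq]

theorem isCyclicallyReduced_iff_isReduced_append_self :
    IsCyclicallyReduced L ↔ IsReduced (L ++ L) := by
  simp only [isCyclicallyReduced_iff, IsReduced, List.isChain_append]
  tauto

theorem IsCyclicallyReduced.append_comm (h : IsCyclicallyReduced (L₁ ++ L₂)) :
    IsCyclicallyReduced (L₂ ++ L₁) := by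
  rw [isCyclicallyReduced_iff_isReduced_append_self] at h ⊢
  rcases eq_or_ne (L₁ ++ L₂) [] with hnil | hne
  · simp_all
  have h₃ : IsReduced (L₁ ++ L₂ ++ (L₁ ++ L₂) ++ (L₁ ++ L₂)) := h.append_overlap h hne
  exact h₃.infix ⟨L₁, L₂, by simp⟩

theorem IsCyclicallyReduced.isReduced_conj_or_exists_rotate (h : IsCyclicallyReduced L)
    (g : α × Bool) :
    IsReduced (g :: L ++ [(g.1, !g.2)]) ∨
      ∃ L', IsCyclicallyReduced L' ∧ L ⊆ L' ∧ mk [g] * mk L * (mk [g])⁻¹ = mk L' := by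
  rcases eq_or_ne L [] with rfl | hne
  · exact Or.inr ⟨[], by simp, by simp, by rw [← one_eq_mk, mul_one, mul_inv_cancel]⟩
  by_cases hhead : L.head? = some (g.1, !g.2)
  · obtain ⟨L₀, rfl⟩ := List.head?_eq_some_iff.1 hhead
    refine Or.inr ⟨L₀ ++ [(g.1, !g.2)], (h : IsCyclicallyReduced ([_] ++ L₀)).append_comm,
      by simp, ?_⟩
    have hL : mk ((g.1, !g.2) :: L₀) = (mk [g])⁻¹ * mk L₀ := by
      rw [inv_mk_singleton, mul_mk]
      rfl
    rw [hL, ← mul_mk, ← inv_mk_singleton]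
    group
  by_cases hlast : L.getLast? = some g
  · obtain ⟨L₀, rfl⟩ := List.getLast?_eq_some_iff.1 hlast
    refine Or.inr ⟨g :: L₀, h.append_comm, by simp, ?_⟩
    rw [← mul_mk, ← mul_assoc, mul_inv_cancel_right, mul_mk]
    rfl
  left
  refine List.isChain_cons.2 ⟨?_, List.IsChain.append h.isReduced (List.isChain_singleton _) ?_⟩
  · intro a ha
    replace ha : a ∈ L.head? := by simpa [List.head?_append_of_ne_nil _ hne] using ha
    exact rel_iff_ne_inv.2 fun hag => hhead (hag ▸ ha)
  · intro b hb c hc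
    obtain rfl : c = (g.1, !g.2) := by simpa using hc.symm
    refine rel_iff_ne_inv.2 fun hbg => hlast ?_
    obtain ⟨b₁, b₂⟩ := b
    simp only [Prod.mk.injEq, Bool.not_inj_iff] at hbg
    rwa [← hbg.1, ← hbg.2] at hb

theorem IsCyclicallyReduced.subset_reduce_conj [DecidableEq α] (hL : IsCyclicallyReduced L)
    (hT : IsReduced T) : L ⊆ reduce (T ++ L ++ invRev T) := by
  induction T using List.reverseRecOn generalizing L with
  | nil => simp [hL.isReduced.reduce_eq]
  | append_singleton T g ih =>
    have hinv : invRev (T ++ [g]) = [(g.1, !g.2)] ++ invRev T := by simp [invRev]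
    rcases hL.isReduced_conj_or_exists_rotate g with hred | ⟨L', hL', hsub, hconj⟩
    · have hleft : IsReduced (T ++ [g] ++ (L ++ [(g.1, !g.2)])) :=
        hT.append_overlap (by simpa using hred) (List.cons_ne_nil _ _)
      have hall : IsReduced (T ++ [g] ++ L ++ [(g.1, !g.2)] ++ invRev T) :=
        (by simpa using hleft : IsReduced (T ++ [g] ++ L ++ [(g.1, !g.2)])).append_overlap
          (by rw [← hinv]; exact hT.invRev) (List.cons_ne_nil _ _)
      rw [hinv, ← List.append_assoc, hall.reduce_eq]
      intro a ha
      simp [ha]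
    · have hT' : IsReduced T := hT.infix ⟨[], [g], by simp⟩
      rw [reduce.sound (L₂ := T ++ L' ++ invRev T) ?_]
      · exact List.Subset.trans hsub (ih hL' hT')
      rw [← mul_mk, ← mul_mk, ← inv_mk, ← mul_mk, ← mul_mk, ← inv_mk, ← mul_mk, ← hconj]
      group

theorem lift_mk_eq_mk_flatMap (f : α → List (β × Bool)) (L : List (α × Bool)) :
    lift (fun i => mk (f i)) (mk L) =
      mk (L.flatMap fun a => cond a.2 (f a.1) (invRev (f a.1))) := by
  induction L with
  | nil => rfl
  | cons a L ih =>
    rw [← List.singleton_append, ← mul_mk, _root_.map_mul, ih, List.flatMap_append, ← mul_mk,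
      lift_mk]
    obtain ⟨i, _ | _⟩ := a <;> simp [inv_mk]

theorem mk_mem_closure_image_of {s : Set α} (h : ∀ a ∈ L, a.1 ∈ s) :
    mk L ∈ Subgroup.closure (of '' s) := by
  induction L with
  | nil => exact one_mem _
  | cons a L ih =>
    rw [List.forall_mem_cons] at h
    rw [← List.singleton_append, ← mul_mk]
    refine mul_mem ?_ (ih h.2)
    have hof : of a.1 ∈ Subgroup.closure (of '' s) := Subgroup.subset_closure ⟨a.1, h.1, rfl⟩
    obtain ⟨i, _ | _⟩ := a
    · simpa [of, inv_mk, invRev] using inv_mem hof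
    · exact hof

variable [DecidableEq α]

theorem IsCyclicallyReduced.toWord_subset_of_isConj {w x : FreeGroup α}
    (hw : IsCyclicallyReduced w.toWord) (h : IsConj w x) : w.toWord ⊆ x.toWord := by
  obtain ⟨c, rfl⟩ := isConj_iff.1 h
  have hmk : c * w * c⁻¹ = mk (c.toWord ++ w.toWord ++ invRev c.toWord) := by
    rw [← mul_mk, ← inv_mk, ← mul_mk, mk_toWord, mk_toWord]
  rw [hmk, toWord_mk]
  exact hw.subset_reduce_conj isReduced_toWord

theorem exists_isConj_isCyclicallyReduced (x : FreeGroup α) :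
    ∃ v, IsConj x v ∧ IsCyclicallyReduced v.toWord ∧ v.toWord ⊆ x.toWord := by
  set C := reduceCyclically x.toWord
  set P := reduceCyclically.conjugator x.toWord
  have hC : IsCyclicallyReduced C := reduceCyclically.isCyclicallyReduced isReduced_toWord
  have hx : P ++ C ++ invRev P = x.toWord := reduceCyclically.conj_conjugator_reduceCyclically _
  refine ⟨mk C, isConj_iff.2 ⟨(mk P)⁻¹, ?_⟩, ?_, ?_⟩
  · rw [← mk_toWord (x := x), ← hx, ← mul_mk, ← mul_mk, ← inv_mk]
    group
  all_goals rw [toWord_mk, hC.isReduced.reduce_eq]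
  · exact hC
  · rw [← hx]
    intro a ha
    simp [ha]

theorem mem_closure_image_of_iff {s : Set α} {x : FreeGroup α} :
    x ∈ Subgroup.closure (of '' s) ↔ ∀ a ∈ x.toWord, a.1 ∈ s := by
  refine ⟨fun hx => ?_, fun hx => mk_toWord (x := x) ▸ mk_mem_closure_image_of hx⟩
  induction hx using Subgroup.closure_induction with
  | mem g hg =>
    obtain ⟨i, hi, rfl⟩ := hg
    simpa [toWord_of] using hi
  | one => simp
  | mul g₁ g₂ _ _ ih₁ ih₂ =>
    intro a ha
    rcases List.mem_append.1 ((toWord_mul_sublist g₁ g₂).subset ha) with h | h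
    exacts [ih₁ a h, ih₂ a h]
  | inv g _ ih =>
    intro a ha
    rw [toWord_inv] at ha
    simp only [invRev, List.mem_reverse, List.mem_map] at ha
    obtain ⟨b, hb, rfl⟩ := ha
    exact ih b hb

/-- Letters are 0-indexed: `(i, true)` stands for `e_{i+1}`, so this is `e₃ ↦ e₃e₄e₅e₄⁻¹e₅⁻¹`. -/
def substCommWord (i : Fin 5) : List (Fin 5 × Bool) :=
  if i = 2 then [(2, true), (3, true), (4, true), (3, false), (4, false)] else [(i, true)]

def substCommBlock (a : Fin 5 × Bool) : List (Fin 5 × Bool) :=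
  cond a.2 (substCommWord a.1) (invRev (substCommWord a.1))

def substComm : FreeGroup (Fin 5) →* FreeGroup (Fin 5) := lift fun i => mk (substCommWord i)

theorem substComm_mk (L : List (Fin 5 × Bool)) :
    substComm (mk L) = mk (L.flatMap substCommBlock) :=
  lift_mk_eq_mk_flatMap _ L

theorem image_substComm_generators :
    substComm '' {of 0, of 1, of 2} = {of 0, of 1, of 2 * ⁅(of 3 : FreeGroup (Fin 5)), of 4⁆} := by
  simp [Set.image_insert_eq, substComm, substCommWord, commutatorElement_def, of, inv_mk, invRev,
    mul_mk]

theorem substCommBlock_ne_nil : ∀ a, substCommBlock a ≠ [] := by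
  decide

theorem isReduced_substCommBlock : ∀ a, IsReduced (substCommBlock a) := by
  unfold IsReduced
  decide

/-- The only cancellation between adjacent blocks is of a letter `e₅^{±1}` against the block of
`e₃^{±1}`. -/
theorem substCommBlock_junction : ∀ a b : Fin 5 × Bool, a.1 ≠ 4 → b.1 ≠ 4 →
    (a.1 = b.1 → a.2 = b.2) →
    ∀ x ∈ (substCommBlock a).getLast?, ∀ y ∈ (substCommBlock b).head?, x.1 = y.1 → x.2 = y.2 := by
  decide

theorem IsReduced.flatMap_substCommBlock {L : List (Fin 5 × Bool)} (h : IsReduced L)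
    (h4 : ∀ a ∈ L, a.1 ≠ 4) : IsReduced (L.flatMap substCommBlock) := by
  rw [List.flatMap, IsReduced,
    List.isChain_flatten (by simpa using fun a _ => substCommBlock_ne_nil a),
    List.forall_mem_map, List.isChain_map]
  exact ⟨fun a _ => isReduced_substCommBlock a,
    h.imp_of_mem_imp fun a b ha hb => substCommBlock_junction a b (h4 a ha) (h4 b hb)⟩

theorem IsCyclicallyReduced.flatMap_substCommBlock {L : List (Fin 5 × Bool)}
    (h : IsCyclicallyReduced L) (h4 : ∀ a ∈ L, a.1 ≠ 4) :
    IsCyclicallyReduced (L.flatMap substCommBlock) := by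
  rw [isCyclicallyReduced_iff_isReduced_append_self] at h ⊢
  rw [← List.flatMap_append]
  exact h.flatMap_substCommBlock (by simpa using h4)

theorem toWord_substComm {v : FreeGroup (Fin 5)} (h4 : ∀ a ∈ v.toWord, a.1 ≠ 4) :
    (substComm v).toWord = v.toWord.flatMap substCommBlock := by
  conv_lhs => rw [← mk_toWord (x := v)]
  rw [substComm_mk, toWord_mk, (isReduced_toWord.flatMap_substCommBlock h4).reduce_eq]

theorem substComm_eq_self {v : FreeGroup (Fin 5)} (h2 : ∀ a ∈ v.toWord, a.1 ≠ 2) :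
    substComm v = v := by
  conv_lhs => rw [← mk_toWord (x := v)]
  rw [substComm_mk]
  conv_rhs => rw [← mk_toWord (x := v), ← List.flatMap_singleton' v.toWord]
  refine congrArg mk (List.flatMap_congr fun a ha => ?_)
  obtain ⟨i, _ | _⟩ := a <;> simp [substCommBlock, substCommWord, h2 _ ha, invRev]

theorem mem_toWord_of_isConj_substComm {v x : FreeGroup (Fin 5)} {b : Bool}
    (hv : IsCyclicallyReduced v.toWord) (h4 : ∀ a ∈ v.toWord, a.1 ≠ 4) (h2 : (2, b) ∈ v.toWord)
    (h : IsConj (substComm v) x) : (3, true) ∈ x.toWord := by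
  have hcyc : IsCyclicallyReduced (substComm v).toWord :=
    toWord_substComm h4 ▸ hv.flatMap_substCommBlock h4
  refine hcyc.toWord_subset_of_isConj h (toWord_substComm h4 ▸ ?_)
  exact List.mem_flatMap.2 ⟨_, h2, by cases b <;> decide⟩

end FreeGroup

open FreeGroup

/-- In `F₅`: if `x ∈ ⟨e₁,e₂,e₃⟩` and `y ∈ ⟨e₁,e₂,e₃·⁅e₄,e₅⁆⟩` are conjugate, then `x` is
conjugate to an element of `⟨e₁,e₂⟩`. -/
theorem statement16 (x y : FreeGroup (Fin 5))
    (hx : x ∈ Subgroup.closure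
      ({FreeGroup.of 0, FreeGroup.of 1, FreeGroup.of 2} : Set (FreeGroup (Fin 5))))
    (hy : y ∈ Subgroup.closure
      ({FreeGroup.of 0, FreeGroup.of 1,
        FreeGroup.of 2 * ⁅(FreeGroup.of 3 : FreeGroup (Fin 5)), FreeGroup.of 4⁆} :
          Set (FreeGroup (Fin 5))))
    (hxy : IsConj x y) :
    ∃ z ∈ Subgroup.closure ({FreeGroup.of 0, FreeGroup.of 1} : Set (FreeGroup (Fin 5))),
      IsConj x z := by
  have hS₃ : ({of 0, of 1, of 2} : Set (FreeGroup (Fin 5))) = of '' {0, 1, 2} := by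
    simp [Set.image_insert_eq]
  have hS₂ : ({of 0, of 1} : Set (FreeGroup (Fin 5))) = of '' {0, 1} := by
    simp [Set.image_insert_eq]
  obtain ⟨a, ha, rfl⟩ := Subgroup.mem_map.1 <| show y ∈ (Subgroup.closure _).map substComm by
    rwa [MonoidHom.map_closure, image_substComm_generators]
  rw [hS₃, mem_closure_image_of_iff] at hx ha
  obtain ⟨v, hav, hv, hva⟩ := exists_isConj_isCyclicallyReduced a
  have hvx : IsConj (substComm v) x := (hxy.trans (substComm.map_isConj hav)).symm
  have hv012 : ∀ b ∈ v.toWord, b.1 = 0 ∨ b.1 = 1 ∨ b.1 = 2 := fun b hb => ha b (hva hb)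
  by_cases h2 : ∃ b, ((2 : Fin 5), b) ∈ v.toWord
  · have h4 : ∀ b ∈ v.toWord, b.1 ≠ 4 := fun b hb => by
      rcases hv012 b hb with h | h | h <;> simp [h]
    obtain ⟨b, hb⟩ := h2
    simpa using hx _ (mem_toWord_of_isConj_substComm hv h4 hb hvx)
  · have hv2 : ∀ b ∈ v.toWord, b.1 ≠ 2 := fun b hb h => h2 ⟨b.2, h ▸ hb⟩
    refine ⟨v, ?_, substComm_eq_self hv2 ▸ hvx.symm⟩
    rw [hS₂, mem_closure_image_of_iff]
    intro b hb
    rcases hv012 b hb with h | h | h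
    exacts [Or.inl h, Or.inr h, absurd h (hv2 b hb)]
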